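/- Let (▷, f := 0, ·_V) be a crossed data of a 4-algebra A by a vector space V with trivial cocycle f = 0. Then the crossed product multiplication makes V × A a 4-algebra (the semidirect product V ⋉ A) if and only if (V, ·_V) is a 4-algebra and a²▷x² + 2 x²·_V (a▷x) + 2 (a▷x)² + 2 a²▷(a▷x) = 0 for all a ∈ A, x ∈ V. -/

import Mathlib

structure FourAlgebra (k : Type*) (A : Type*) [Field k] [AddCommGroup A] [Module k A] where
  mul : A →ₗ[k] A →ₗ[k] A
  comm : ∀ a b : A, mul a b = mul b a
  four : ∀ a : A, mul (mul a a) (mul a a) = 0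

/-!
Write `z = (x, a)`, `s = x·x`, `t = a▷x`. Then `z∘z = (s + 2t, a²)`, and once `·_V` is commutative
the `V`-component of `(z∘z)∘(z∘z)` expands to `s·s + 2 Φ(a, x)`, where `Φ(a, x)` is the left-hand
side of the compatibility condition. Taking `a = 0` gives `s·s = 0`, and then `2 Φ(a, x) = 0`
forces `Φ(a, x) = 0` since `2` is invertible in `k`.
-/

section SemidirectProduct

variable {k A V : Type*} [CommRing k] [AddCommGroup A] [Module k A] [AddCommGroup V] [Module k V]
  (mA : A →ₗ[k] A →ₗ[k] A) (tr : A →ₗ[k] V →ₗ[k] V) (mV : V →ₗ[k] V →ₗ[k] V)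

def semidirectMul (z w : V × A) : V × A :=
  (mV z.1 w.1 + tr z.2 w.1 + tr w.2 z.1, mA z.2 w.2)

def compatibilityDefect (a : A) (x : V) : V :=
  tr (mA a a) (mV x x) + 2 • mV (mV x x) (tr a x)
    + 2 • mV (tr a x) (tr a x) + 2 • tr (mA a a) (tr a x)

variable {mA tr mV}

theorem semidirectMul_comm_iff (hA : ∀ a b, mA a b = mA b a) :
    (∀ z w, semidirectMul mA tr mV z w = semidirectMul mA tr mV w z) ↔
      ∀ x y, mV x y = mV y x := by
  constructor
  · intro h x y
    simpa [semidirectMul] using congrArg Prod.fst (h (x, 0) (y, 0))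
  · intro h z w
    ext
    · simp only [semidirectMul, h z.1 w.1]
      abel
    · exact hA z.2 w.2

theorem fst_semidirectMul_sq_sq (hV : ∀ x y, mV x y = mV y x) (x : V) (a : A) :
    (semidirectMul mA tr mV (semidirectMul mA tr mV (x, a) (x, a))
        (semidirectMul mA tr mV (x, a) (x, a))).1 =
      mV (mV x x) (mV x x) + 2 • compatibilityDefect mA tr mV a x := by
  simp only [semidirectMul, compatibilityDefect, map_add, LinearMap.add_apply, two_nsmul,
    hV (tr a x) (mV x x)]
  abel

theorem compatibilityDefect_zero_left (x : V) : compatibilityDefect mA tr mV 0 x = 0 := by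
  simp [compatibilityDefect]

end SemidirectProduct

theorem eq_zero_of_two_nsmul_eq_zero {k V : Type*} [Field k] [AddCommGroup V] [Module k V]
    (h2 : (2 : k) ≠ 0) {v : V} (h : 2 • v = 0) : v = 0 := by
  rw [← ofNat_smul_eq_nsmul k] at h
  exact (smul_eq_zero.mp h).resolve_left h2

/-- With trivial cocycle f = 0, the crossed product (semidirect product) multiplication
on V × A is a 4-algebra structure iff (V, ·_V) is a 4-algebra and the compatibility
a²▷x² + 2 x²·(a▷x) + 2 (a▷x)² + 2 a²▷(a▷x) = 0 holds. -/
theorem stmt8 (k A V : Type*) [Field k] [AddCommGroup A] [Module k A]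
    [AddCommGroup V] [Module k V] (h2 : (2 : k) ≠ 0) (FA : FourAlgebra k A)
    (tr : A →ₗ[k] V →ₗ[k] V) (mv : V →ₗ[k] V →ₗ[k] V) :
    let p : V × A → V × A → V × A := fun z w =>
      (mv z.1 w.1 + tr z.2 w.1 + tr w.2 z.1, FA.mul z.2 w.2)
    ((∀ z w, p z w = p w z) ∧ (∀ z, p (p z z) (p z z) = 0)) ↔
      ((∀ x y : V, mv x y = mv y x) ∧ (∀ x : V, mv (mv x x) (mv x x) = 0) ∧
       (∀ (a : A) (x : V), tr (FA.mul a a) (mv x x) + 2 • mv (mv x x) (tr a x)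
          + 2 • mv (tr a x) (tr a x) + 2 • tr (FA.mul a a) (tr a x) = 0)) := by
  change ((∀ z w, semidirectMul FA.mul tr mv z w = semidirectMul FA.mul tr mv w z) ∧
      ∀ z, semidirectMul FA.mul tr mv (semidirectMul FA.mul tr mv z z)
        (semidirectMul FA.mul tr mv z z) = 0) ↔
    (_ ∧ _ ∧ ∀ a x, compatibilityDefect FA.mul tr mv a x = 0)
  rw [semidirectMul_comm_iff FA.comm]
  refine and_congr_right fun hV => ⟨fun h4 => ?_, fun ⟨hV4, hΦ⟩ => ?_⟩
  · have hV4 (x : V) : mv (mv x x) (mv x x) = 0 := by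
      simpa [fst_semidirectMul_sq_sq hV, compatibilityDefect_zero_left] using
        congrArg Prod.fst (h4 (x, 0))
    refine ⟨hV4, fun a x => eq_zero_of_two_nsmul_eq_zero h2 ?_⟩
    simpa [fst_semidirectMul_sq_sq hV, hV4] using congrArg Prod.fst (h4 (x, a))
  · rintro ⟨x, a⟩
    ext
    · rw [fst_semidirectMul_sq_sq hV, hV4, hΦ, smul_zero, add_zero, Prod.fst_zero]
    · exact FA.four a
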